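/- arXiv:1507.05979 — 3 statements merged into one kernel-verified Lean document; each statement's English description precedes it below -/
import Mathlib

section
/- If R is a linear operator on V ⊗ V of product form R = F ⊗ G (with F, G invertible linear maps on a finite-dimensional complex vector space V) satisfying the Yang-Baxter equation (R⊗1)(1⊗R)(R⊗1) = (1⊗R)(R⊗1)(1⊗R), then F and G are scalar multiples of the identity, and hence R is a scalar multiple of the identity on V ⊗ V. -/
open TensorProduct

variable {V : Type*} [AddCommGroup V] [Module ℂ V]

/-- `R ⊗ 1` acting on `(V ⊗ V) ⊗ V`. -/
noncomputable def ybLeft (R : Module.End ℂ (V ⊗[ℂ] V)) :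
    Module.End ℂ ((V ⊗[ℂ] V) ⊗[ℂ] V) :=
  TensorProduct.map R LinearMap.id

/-- `1 ⊗ R` acting on `(V ⊗ V) ⊗ V` (via the associator). -/
noncomputable def ybRight (R : Module.End ℂ (V ⊗[ℂ] V)) :
    Module.End ℂ ((V ⊗[ℂ] V) ⊗[ℂ] V) :=
  (TensorProduct.assoc ℂ V V V).symm.toLinearMap ∘ₗ
    TensorProduct.map LinearMap.id R ∘ₗ (TensorProduct.assoc ℂ V V V).toLinearMap

/-- The (constant) Yang-Baxter equation. -/
def YangBaxter (R : Module.End ℂ (V ⊗[ℂ] V)) : Prop :=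
  ybLeft R * ybRight R * ybLeft R = ybRight R * ybLeft R * ybRight R

lemma exists_dual_eq_one [FiniteDimensional ℂ V] {p : V} (hp : p ≠ 0) :
    ∃ φ : Module.Dual ℂ V, φ p = 1 := by
  have h := (Module.forall_dual_apply_eq_zero_iff ℂ p).not.mpr hp
  push_neg at h
  obtain ⟨φ, hφ⟩ := h
  exact ⟨(φ p)⁻¹ • φ, by simp [inv_mul_cancel₀ hφ]⟩

theorem stmt0 [FiniteDimensional ℂ V] (F G : Module.End ℂ V)
    (hF : Function.Bijective F) (hG : Function.Bijective G)
    (hYB : YangBaxter (TensorProduct.map F G)) :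
    ∃ c d : ℂ, F = c • (1 : Module.End ℂ V) ∧ G = d • (1 : Module.End ℂ V) ∧
      TensorProduct.map F G = (c * d) • (1 : Module.End ℂ (V ⊗[ℂ] V)) := by
  have key : ∀ u v w : V,
      ((F (F u)) ⊗ₜ[ℂ] (G (F (G v)))) ⊗ₜ[ℂ] (G w)
        = ((F u) ⊗ₜ[ℂ] (F (G (F v)))) ⊗ₜ[ℂ] (G (G w)) := by
    intro u v w
    have := LinearMap.congr_fun hYB ((u ⊗ₜ[ℂ] v) ⊗ₜ[ℂ] w)
    simpa [YangBaxter, ybLeft, ybRight, Module.End.mul_apply] using this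
  rcases subsingleton_or_nontrivial V with hV | hV
  · refine ⟨1, 1, Subsingleton.elim _ _, Subsingleton.elim _ _, ?_⟩
    haveI : Subsingleton (V ⊗[ℂ] V) := inferInstance
    exact Subsingleton.elim _ _
  obtain ⟨v0, hv0⟩ := exists_ne (0 : V)
  have hFne : ∀ x : V, x ≠ 0 → F x ≠ 0 := fun x hx h =>
    hx (hF.injective (by simpa using h))
  have hGne : ∀ x : V, x ≠ 0 → G x ≠ 0 := fun x hx h =>
    hx (hG.injective (by simpa using h))
  have hp : G (F (G v0)) ≠ 0 := hGne _ (hFne _ (hGne _ hv0))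
  have hq : F (G (F v0)) ≠ 0 := hFne _ (hGne _ (hFne _ hv0))
  -- F is scalar
  obtain ⟨φ, hφ⟩ := exists_dual_eq_one hp
  obtain ⟨ψ, hψ⟩ := exists_dual_eq_one (hGne _ hv0)
  set c : ℂ := ψ (G (G v0)) * φ (F (G (F v0))) with hc
  have hFc : ∀ u : V, F (F u) = c • F u := by
    intro u
    have h1 := congrArg ((TensorProduct.rid ℂ V).toLinearMap ∘ₗ
      TensorProduct.map ((TensorProduct.rid ℂ V).toLinearMap ∘ₗ
        TensorProduct.map LinearMap.id φ) ψ) (key u v0 v0)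
    simp only [LinearMap.comp_apply, TensorProduct.map_tmul,
      LinearEquiv.coe_coe, TensorProduct.rid_tmul, LinearMap.id_coe, id_eq,
      LinearMap.map_smul, hφ, hψ, one_smul, smul_smul] at h1
    simpa [hc] using h1
  have hFscalar : ∀ x : V, F x = c • x := by
    intro x
    obtain ⟨u, rfl⟩ := hF.surjective x
    exact hFc u
  -- G is scalar
  obtain ⟨α, hα⟩ := exists_dual_eq_one (hFne _ hv0)
  obtain ⟨φ', hφ'⟩ := exists_dual_eq_one hq
  set d : ℂ := α (F (F v0)) * φ' (G (F (G v0))) with hd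
  have hGd : ∀ w : V, G (G w) = d • G w := by
    intro w
    have h1 := congrArg ((TensorProduct.lid ℂ V).toLinearMap ∘ₗ
      TensorProduct.map ((TensorProduct.lid ℂ ℂ).toLinearMap ∘ₗ
        TensorProduct.map α φ') LinearMap.id) (key v0 v0 w)
    simp only [LinearMap.comp_apply, TensorProduct.map_tmul,
      LinearEquiv.coe_coe, TensorProduct.lid_tmul, LinearMap.id_coe, id_eq,
      hα, hφ', smul_eq_mul, one_mul, mul_one, smul_smul] at h1
    simpa [hd] using h1.symm
  have hGscalar : ∀ x : V, G x = d • x := by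
    intro x
    obtain ⟨w, rfl⟩ := hG.surjective x
    exact hGd w
  refine ⟨c, d, ?_, ?_, ?_⟩
  · ext x; simpa using hFscalar x
  · ext x; simpa using hGscalar x
  · apply TensorProduct.ext'
    intro x y
    simp [hFscalar, hGscalar, TensorProduct.smul_tmul', TensorProduct.tmul_smul,
      smul_smul, mul_comm]
end

section
/- Let T be a linear transformation on the space Mₙ(ℂ) of n × n complex matrices such that T maps every rank-one matrix to a rank-one matrix and T is invertible. Then there exist invertible matrices A, B ∈ Mₙ(ℂ) such that either T(X) = A X B for all X, or T(X) = A Xᵀ B for all X. -/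
/-!
Write `x ⊗ a` for `vecMulVec x a`. For fixed `x ≠ 0` the matrices `x ⊗ a` form an `n`-dimensional
space of matrices of rank `≤ 1`, hence so does its image under `T`; and every space of matrices
of rank `≤ 1` lies in some `{u ⊗ c}` or in some `{c ⊗ v}`, by dimension then filling it. Two such
images of different kinds would share the nonzero matrix `u ⊗ v`: impossible for non-proportional
`x` (their spaces meet only in `0`), and for proportional `x` once `n ≥ 2` (`{u ⊗ c} ∩ {c ⊗ v}`
is a line). So, up to transposition, `T (x ⊗ a) = u x ⊗ Φₓ a` with linear bijections `Φₓ`. As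
`T ((x + e) ⊗ a)` has rank `≤ 1` and `u x`, `u e` are independent for non-proportional `x`, `e`,
each `Φₓ a` is proportional to `Φₑ a`, which forces `Φₓ` to be a multiple of `Φₑ`. Hence
`T (x ⊗ a) = F x ⊗ G a` with `F`, `G` linear, i.e. `T X = A X Bᵀ`.
-/

open Matrix Module

theorem LinearMap.exists_eq_smul_of_forall_not_linearIndependent {K V W : Type*} [Field K]
    [AddCommGroup V] [Module K V] [AddCommGroup W] [Module K W] (f : V →ₗ[K] W) (g : V ≃ₗ[K] W)
    (h : ∀ v, ¬ LinearIndependent K ![g v, f v]) : ∃ c : K, f = c • (g : V →ₗ[K] W) := by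
  obtain ⟨c, hc⟩ := (f ∘ₗ g.symm.toLinearMap).exists_eq_smul_id_of_forall_notLinearIndependent
    fun w => by simpa using h (g.symm w)
  exact ⟨c, LinearMap.ext fun v => by simpa using LinearMap.congr_fun hc (g v)⟩

namespace Matrix

variable {K : Type*} [Field K] {m n : Type*}

theorem exists_eq_smul_of_vecMulVec_eq {u c' : m → K} {c v : n → K} (hu : u ≠ 0)
    (h : vecMulVec u c = vecMulVec c' v) : ∃ k : K, c = k • v := by
  obtain ⟨i, hi⟩ := Function.ne_iff.1 hu
  have hi : u i ≠ 0 := hi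
  refine ⟨c' i / u i, funext fun j => ?_⟩
  have := congr_fun₂ h i j
  simp only [vecMulVec_apply, Pi.smul_apply, smul_eq_mul] at this ⊢
  field_simp
  linear_combination this

theorem exists_eq_smul_of_vecMulVec_eq' {u c' : m → K} {c v : n → K} (hv : v ≠ 0)
    (h : vecMulVec u c = vecMulVec c' v) : ∃ k : K, c' = k • u := by
  rw [← transpose_inj, transpose_vecMulVec, transpose_vecMulVec] at h
  exact exists_eq_smul_of_vecMulVec_eq hv h.symm

theorem vecMulVec_right_injective {x : m → K} (hx : x ≠ 0) :
    Function.Injective (vecMulVec x : (n → K) → Matrix m n K) := by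
  intro a b h
  obtain ⟨i, hi⟩ := Function.ne_iff.1 hx
  funext j
  exact mul_left_cancel₀ hi (by simpa [vecMulVec_apply] using congr_fun₂ h i j)

theorem not_linearIndependent_of_add_vecMulVec_eq {x₁ x₂ p : m → K} {y₁ y₂ q : n → K}
    (hx : LinearIndependent K ![x₁, x₂])
    (h : vecMulVec x₁ y₁ + vecMulVec x₂ y₂ = vecMulVec p q) :
    ¬ LinearIndependent K ![y₁, y₂] := by
  intro hy
  rw [LinearIndependent.pair_iff] at hx hy
  have hcol : ∀ j, y₁ j • x₁ + y₂ j • x₂ = q j • p := fun j => funext fun i => by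
    simpa [vecMulVec_apply, mul_comm] using congr_fun₂ h i j
  obtain ⟨j₀, hj₀⟩ : ∃ j₀, q j₀ ≠ 0 := by
    by_contra! hq
    refine one_ne_zero (hy 1 0 (funext fun j => ?_)).1
    simpa using (hx _ _ (by simpa [hq] using hcol j)).1
  -- comparing column `j` with column `j₀` shows that `y₁` and `y₂` are multiples of `q`
  have hmul : ∀ j, q j₀ * y₁ j = q j * y₁ j₀ ∧ q j₀ * y₂ j = q j * y₂ j₀ := fun j => by
    have := hx (q j₀ * y₁ j - q j * y₁ j₀) (q j₀ * y₂ j - q j * y₂ j₀) (by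
      linear_combination (norm := module) q j₀ • hcol j - q j • hcol j₀)
    exact ⟨sub_eq_zero.1 this.1, sub_eq_zero.1 this.2⟩
  have hy₁ : y₁ j₀ = 0 := by
    have := (hy (q j₀ * y₂ j₀) (- q j₀ * y₁ j₀) (funext fun j => by
      simp only [Pi.add_apply, Pi.smul_apply, smul_eq_mul, Pi.zero_apply]
      linear_combination y₂ j₀ * (hmul j).1 - y₁ j₀ * (hmul j).2)).2
    simpa [hj₀] using this
  refine one_ne_zero (hy 1 0 (funext fun j => ?_)).1
  simpa [hy₁, hj₀] using (hmul j).1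

theorem eq_zero_of_rank_eq_zero [Fintype n] {X : Matrix m n K} (h : X.rank = 0) : X = 0 := by
  classical
  rw [rank, Submodule.finrank_eq_zero, LinearMap.range_eq_bot, ← toLin'_apply'] at h
  exact toLin'.injective (by simpa using h)

theorem rank_le_one_of_rank_eq_one {m' n' : Type*} [Fintype n] [Fintype n']
    {S : Matrix m n K →ₗ[K] Matrix m' n' K} (hS : ∀ X, X.rank = 1 → (S X).rank = 1)
    {X : Matrix m n K} (hX : X.rank ≤ 1) : (S X).rank ≤ 1 := by
  rcases Nat.le_one_iff_eq_zero_or_eq_one.1 hX with h | h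
  · simp [eq_zero_of_rank_eq_zero h]
  · exact (hS X h).le

theorem exists_eq_vecMulVec_of_rank_le_one [Fintype m] [Fintype n] {X : Matrix m n K}
    (h : X.rank ≤ 1) :
    ∃ p q, X = vecMulVec p q := by
  rw [rank_eq_finrank_span_cols, finrank_le_one_iff] at h
  obtain ⟨p, hp⟩ := h
  choose q hq using fun j => hp ⟨X.col j, Submodule.subset_span (Set.mem_range_self j)⟩
  refine ⟨p, q, ext fun i j => ?_⟩
  simpa [vecMulVec_apply, mul_comm] using congr_fun (congr_arg Subtype.val (hq j)).symm i

def vecMulVecLeft (u : m → K) : Submodule K (Matrix m n K) :=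
  LinearMap.range (vecMulVecBilin K K u)

def vecMulVecRight (v : n → K) : Submodule K (Matrix m n K) :=
  LinearMap.range ((vecMulVecBilin K K).flip v)

@[simp]
theorem mem_vecMulVecLeft {u : m → K} {X : Matrix m n K} :
    X ∈ vecMulVecLeft u ↔ ∃ c, vecMulVec u c = X := by
  simp [vecMulVecLeft]

@[simp]
theorem mem_vecMulVecRight {v : n → K} {X : Matrix m n K} :
    X ∈ vecMulVecRight v ↔ ∃ c, vecMulVec c v = X := by
  simp [vecMulVecRight]

@[simp]
theorem vecMulVecLeft_zero : vecMulVecLeft (0 : m → K) = (⊥ : Submodule K (Matrix m n K)) := by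
  ext X; simp [eq_comm]

@[simp]
theorem vecMulVecRight_zero : vecMulVecRight (0 : n → K) = (⊥ : Submodule K (Matrix m n K)) := by
  ext X
  simp only [mem_vecMulVecRight, Submodule.mem_bot]
  exact ⟨fun ⟨c, h⟩ => h ▸ ext fun i j => by simp [vecMulVec_apply],
    fun h => ⟨0, h ▸ zero_vecMulVec 0⟩⟩

theorem vecMulVecLeft_smul_le (k : K) (u : m → K) :
    vecMulVecLeft (k • u) ≤ (vecMulVecLeft u : Submodule K (Matrix m n K)) := by
  rintro _ ⟨c, rfl⟩
  exact mem_vecMulVecLeft.2 ⟨k • c, by simp [vecMulVec_smul]⟩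

theorem vecMulVecLeft_inf_vecMulVecRight_le (u : m → K) (v : n → K) :
    vecMulVecLeft u ⊓ vecMulVecRight v ≤ K ∙ vecMulVec u v := by
  rintro X ⟨⟨c, rfl⟩, ⟨c', h⟩⟩
  rcases eq_or_ne u 0 with rfl | hu
  · simp
  obtain ⟨k, rfl⟩ := exists_eq_smul_of_vecMulVec_eq hu h.symm
  exact Submodule.mem_span_singleton.2 ⟨k, (vecMulVec_smul _ _ _).symm⟩

theorem finrank_vecMulVecLeft_le [Fintype n] (u : m → K) :
    finrank K (vecMulVecLeft u : Submodule K (Matrix m n K)) ≤ Fintype.card n :=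
  (LinearMap.finrank_range_le _).trans (finrank_fintype_fun_eq_card K).le

theorem finrank_vecMulVecLeft [Fintype n] {u : m → K} (hu : u ≠ 0) :
    finrank K (vecMulVecLeft u : Submodule K (Matrix m n K)) = Fintype.card n := by
  rw [vecMulVecLeft, LinearMap.finrank_range_of_inj (vecMulVec_right_injective hu),
    finrank_fintype_fun_eq_card]

theorem finrank_vecMulVecRight_le [Fintype m] (v : n → K) :
    finrank K (vecMulVecRight v : Submodule K (Matrix m n K)) ≤ Fintype.card m :=
  (LinearMap.finrank_range_le _).trans (finrank_fintype_fun_eq_card K).le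

theorem exists_le_vecMulVecLeft_or_le_vecMulVecRight [Fintype m] [Fintype n]
    (P : Submodule K (Matrix m n K)) (hP : ∀ X ∈ P, X.rank ≤ 1) :
    (∃ u, P ≤ vecMulVecLeft u) ∨ ∃ v, P ≤ vecMulVecRight v := by
  rcases eq_or_ne P ⊥ with rfl | hP₀
  · exact Or.inl ⟨0, bot_le⟩
  obtain ⟨_, hX₀, hX₀₀⟩ := (Submodule.ne_bot_iff P).1 hP₀
  obtain ⟨x, y, rfl⟩ := exists_eq_vecMulVec_of_rank_le_one (hP _ hX₀)
  have hx : x ≠ 0 := by rintro rfl; simp at hX₀₀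
  have hy : y ≠ 0 := by rintro rfl; exact hX₀₀ (ext fun i j => by simp [vecMulVec_apply])
  suffices ∀ X ∈ P, X ∈ vecMulVecLeft x ∨ X ∈ vecMulVecRight y from
    (AddSubgroupClass.subset_union.1 this).imp (⟨x, ·⟩) (⟨y, ·⟩)
  intro _ hX
  obtain ⟨p, q, rfl⟩ := exists_eq_vecMulVec_of_rank_le_one (hP _ hX)
  by_cases hxp : LinearIndependent K ![x, p]
  · obtain ⟨p', q', h⟩ := exists_eq_vecMulVec_of_rank_le_one (hP _ (P.add_mem hX₀ hX))
    obtain ⟨k, rfl⟩ := not_forall_not.1 <|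
      (LinearIndependent.pair_iff' hy).not.1 (not_linearIndependent_of_add_vecMulVec_eq hxp h)
    exact Or.inr (mem_vecMulVecRight.2 ⟨k • p, by rw [vecMulVec_smul, smul_vecMulVec]⟩)
  · obtain ⟨k, rfl⟩ := not_forall_not.1 <| (LinearIndependent.pair_iff' hx).not.1 hxp
    exact Or.inl (mem_vecMulVecLeft.2 ⟨k • q, by rw [vecMulVec_smul, smul_vecMulVec]⟩)

theorem exists_linearMap_of_range_le_vecMulVecLeft {W : Type*} [AddCommGroup W] [Module K W]
    (S : W →ₗ[K] Matrix m n K) {u : m → K} (hu : u ≠ 0)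
    (h : LinearMap.range S ≤ vecMulVecLeft u) :
    ∃ Φ : W →ₗ[K] n → K, ∀ w, S w = vecMulVec u (Φ w) := by
  obtain ⟨i, hi⟩ := Function.ne_iff.1 hu
  refine ⟨(u i)⁻¹ • (LinearMap.proj (φ := fun _ : m => n → K) i ∘ₗ S), fun w => ?_⟩
  obtain ⟨c, hc⟩ := mem_vecMulVecLeft.1 (h ⟨w, rfl⟩)
  have hc' : (u i)⁻¹ • S w i = c := by
    rw [← hc]; funext j; simp [vecMulVec_apply, inv_mul_cancel_left₀ hi]
  change S w = vecMulVec u ((u i)⁻¹ • S w i)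
  rw [hc', hc]

theorem exists_linearMap_forall_eq_vecMulVec {m' n' : Type*} [Nonempty n'] [DecidableEq n']
    {T : Matrix m n K →ₗ[K] Matrix m' n' K} {G : (n → K) →ₗ[K] n' → K}
    (hG : Function.Surjective G) (h : ∀ x, ∃ p, ∀ a, T (vecMulVec x a) = vecMulVec p (G a)) :
    ∃ F : (m → K) →ₗ[K] m' → K, ∀ x a, T (vecMulVec x a) = vecMulVec (F x) (G a) := by
  obtain ⟨j⟩ := ‹Nonempty n'›
  obtain ⟨a₀, ha₀⟩ := hG (Pi.single j 1)
  -- read the left factor off column `j` of `T (x ⊗ a₀) = p ⊗ eⱼ`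
  refine ⟨LinearMap.proj j ∘ₗ (transposeLinearEquiv m' n' K K).toLinearMap ∘ₗ T ∘ₗ
    (vecMulVecBilin K K).flip a₀, fun x a => ?_⟩
  obtain ⟨p, hp⟩ := h x
  have hF : (T (vecMulVec x a₀))ᵀ j = p := funext fun i => by simp [hp, ha₀, vecMulVec_apply]
  rw [hp a, ← hF]
  rfl

section Preserver

variable {T : Matrix n n K →ₗ[K] Matrix n n K}

theorem linearIndependent_of_forall_eq_vecMulVec [Nonempty n] (hT : Function.Injective T)
    {x₁ x₂ u₁ u₂ : n → K} (hx : LinearIndependent K ![x₁, x₂]) (hu₁ : u₁ ≠ 0)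
    {Φ₁ : (n → K) ≃ₗ[K] n → K} {Φ₂ : (n → K) →ₗ[K] n → K}
    (h₁ : ∀ a, T (vecMulVec x₁ a) = vecMulVec u₁ (Φ₁ a))
    (h₂ : ∀ a, T (vecMulVec x₂ a) = vecMulVec u₂ (Φ₂ a)) :
    LinearIndependent K ![u₁, u₂] := by
  by_contra hu
  obtain ⟨k, rfl⟩ := not_forall_not.1 <| (LinearIndependent.pair_iff' hu₁).not.1 hu
  obtain ⟨a, ha⟩ := exists_ne (0 : n → K)
  have : vecMulVec x₁ (Φ₁.symm (k • Φ₂ a)) = vecMulVec x₂ a :=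
    hT (by rw [h₁, h₂, LinearEquiv.apply_symm_apply, vecMulVec_smul, smul_vecMulVec])
  obtain ⟨k', rfl⟩ := exists_eq_smul_of_vecMulVec_eq' ha this
  simpa using LinearIndependent.pair_iff.1 hx k' (-1) (by simp)

variable [Fintype n]

theorem finrank_map_vecMulVecLeft (hT : Function.Injective T) {x : n → K} (hx : x ≠ 0) :
    finrank K (Submodule.map T (vecMulVecLeft x)) = Fintype.card n := by
  rw [← LinearEquiv.finrank_eq (Submodule.equivMapOfInjective T hT _), finrank_vecMulVecLeft hx]

theorem map_vecMulVecLeft_ne_bot [Nonempty n] (hT : Function.Injective T) {x : n → K}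
    (hx : x ≠ 0) : Submodule.map T (vecMulVecLeft x) ≠ ⊥ := fun h => by
  have := finrank_map_vecMulVecLeft hT hx
  rw [h, finrank_bot] at this
  exact Fintype.card_ne_zero this.symm

theorem not_map_vecMulVecLeft_le_inf [Nontrivial n] (hT : Function.Injective T) {x : n → K}
    (hx : x ≠ 0) (u v : n → K) :
    ¬ Submodule.map T (vecMulVecLeft x) ≤ vecMulVecLeft u ⊓ vecMulVecRight v := fun h => by
  have := (Submodule.finrank_mono (h.trans (vecMulVecLeft_inf_vecMulVecRight_le u v))).trans
    (finrank_span_le_card _)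
  rw [finrank_map_vecMulVecLeft hT hx] at this
  exact Fintype.one_lt_card.not_ge (by simpa using this)

theorem not_map_vecMulVecLeft_le_of_map_le_vecMulVecRight [Nontrivial n]
    (hT : Function.Injective T) {x₁ x₂ u v : n → K} (hx₁ : x₁ ≠ 0) (hx₂ : x₂ ≠ 0)
    (h₁ : Submodule.map T (vecMulVecLeft x₁) ≤ vecMulVecRight v) :
    ¬ Submodule.map T (vecMulVecLeft x₂) ≤ vecMulVecLeft u := fun h₂ => by
  have hu : u ≠ 0 := by
    rintro rfl; exact map_vecMulVecLeft_ne_bot hT hx₂ (le_bot_iff.1 (by simpa using h₂))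
  have hv : v ≠ 0 := by
    rintro rfl; exact map_vecMulVecLeft_ne_bot hT hx₁ (le_bot_iff.1 (by simpa using h₁))
  have e₁ := Submodule.eq_of_le_of_finrank_le h₁
    ((finrank_vecMulVecRight_le v).trans (finrank_map_vecMulVecLeft hT hx₁).ge)
  have e₂ := Submodule.eq_of_le_of_finrank_le h₂
    ((finrank_vecMulVecLeft_le u).trans (finrank_map_vecMulVecLeft hT hx₂).ge)
  -- `u ⊗ v` lies in both images, so `x₁` and `x₂` are proportional
  obtain ⟨_, ⟨a, rfl⟩, ha⟩ : vecMulVec u v ∈ Submodule.map T (vecMulVecLeft x₁) :=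
    e₁ ▸ mem_vecMulVecRight.2 ⟨u, rfl⟩
  obtain ⟨_, ⟨b, rfl⟩, hb⟩ : vecMulVec u v ∈ Submodule.map T (vecMulVecLeft x₂) :=
    e₂ ▸ mem_vecMulVecLeft.2 ⟨v, rfl⟩
  have hb₀ : b ≠ 0 := by
    rintro rfl
    simp only [map_zero] at hb
    exact vecMulVec_ne_zero hu hv hb.symm
  obtain ⟨k, rfl⟩ := exists_eq_smul_of_vecMulVec_eq' hb₀ (hT (ha.trans hb.symm))
  exact not_map_vecMulVecLeft_le_inf hT hx₂ u v
    (le_inf h₂ ((Submodule.map_mono (vecMulVecLeft_smul_le k x₁)).trans h₁))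

theorem forall_map_vecMulVecLeft_le_or [Nontrivial n] (hT : Function.Injective T)
    (hrk : ∀ X : Matrix n n K, X.rank ≤ 1 → (T X).rank ≤ 1) :
    (∀ x, ∃ u, Submodule.map T (vecMulVecLeft x) ≤ vecMulVecLeft u) ∨
      ∀ x, ∃ v, Submodule.map T (vecMulVecLeft x) ≤ vecMulVecRight v := by
  have key (x : n → K) := exists_le_vecMulVecLeft_or_le_vecMulVecRight
    (Submodule.map T (vecMulVecLeft x)) (by
      rintro _ ⟨_, ⟨a, rfl⟩, rfl⟩
      exact hrk _ (rank_vecMulVec_le x a))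
  by_contra! h
  obtain ⟨⟨x₁, h₁⟩, ⟨x₂, h₂⟩⟩ := h
  have hx₁ : x₁ ≠ 0 := by rintro rfl; exact h₁ 0 (by simp)
  have hx₂ : x₂ ≠ 0 := by rintro rfl; exact h₂ 0 (by simp)
  obtain ⟨v, hv⟩ := (key x₁).resolve_left (not_exists.2 h₁)
  obtain ⟨u, hu⟩ := (key x₂).resolve_right (not_exists.2 h₂)
  exact not_map_vecMulVecLeft_le_of_map_le_vecMulVecRight hT hx₁ hx₂ hv hu

theorem exists_linearEquiv_of_map_vecMulVecLeft_le [Nonempty n] (hT : Function.Injective T)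
    {x u : n → K} (hx : x ≠ 0) (h : Submodule.map T (vecMulVecLeft x) ≤ vecMulVecLeft u) :
    u ≠ 0 ∧ ∃ Φ : (n → K) ≃ₗ[K] n → K, ∀ a, T (vecMulVec x a) = vecMulVec u (Φ a) := by
  have hu : u ≠ 0 := by
    rintro rfl; exact map_vecMulVecLeft_ne_bot hT hx (le_bot_iff.1 (by simpa using h))
  obtain ⟨Φ, hΦ⟩ := exists_linearMap_of_range_le_vecMulVecLeft (T ∘ₗ vecMulVecBilin K K x) hu
    (by rwa [LinearMap.range_comp])
  have hΦinj : Function.Injective Φ := fun a b hab => by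
    have := hΦ a
    rw [hab, ← hΦ b] at this
    exact vecMulVec_right_injective hx (hT (by simpa using this))
  exact ⟨hu, LinearEquiv.ofInjectiveEndo Φ hΦinj, by simpa using hΦ⟩

theorem exists_linearEquiv_forall_exists_eq_vecMulVec [Nonempty n] (hT : Function.Injective T)
    (hrk : ∀ X : Matrix n n K, X.rank ≤ 1 → (T X).rank ≤ 1)
    (hrow : ∀ x, ∃ u, Submodule.map T (vecMulVecLeft x) ≤ vecMulVecLeft u) :
    ∃ G : (n → K) ≃ₗ[K] n → K, ∀ x, ∃ p, ∀ a, T (vecMulVec x a) = vecMulVec p (G a) := by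
  choose u hu using hrow
  obtain ⟨e, he⟩ := exists_ne (0 : n → K)
  obtain ⟨hu₀, G, hG⟩ := exists_linearEquiv_of_map_vecMulVecLeft_le hT he (hu e)
  refine ⟨G, fun x => ?_⟩
  by_cases hx : LinearIndependent K ![e, x]
  · obtain ⟨-, Φ, hΦ⟩ := exists_linearEquiv_of_map_vecMulVecLeft_le hT
      (by simpa using hx.ne_zero 1) (hu x)
    have hind := linearIndependent_of_forall_eq_vecMulVec hT hx hu₀ hG hΦ
    -- `T ((e + x) ⊗ a) = u e ⊗ G a + u x ⊗ Φ a` has rank at most one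
    have hdep (a : n → K) : ¬ LinearIndependent K ![G a, Φ a] := by
      obtain ⟨p, q, h⟩ := exists_eq_vecMulVec_of_rank_le_one (hrk _ (rank_vecMulVec_le (e + x) a))
      rw [add_vecMulVec, map_add, hG, hΦ] at h
      exact not_linearIndependent_of_add_vecMulVec_eq hind h
    obtain ⟨c, hc⟩ := (Φ : (n → K) →ₗ[K] n → K).exists_eq_smul_of_forall_not_linearIndependent
      G hdep
    exact ⟨c • u x, fun a => by
      rw [hΦ, ← LinearEquiv.coe_coe, hc, LinearMap.smul_apply, vecMulVec_smul, smul_vecMulVec,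
        LinearEquiv.coe_coe]⟩
  · obtain ⟨k, rfl⟩ := not_forall_not.1 <| (LinearIndependent.pair_iff' he).not.1 hx
    exact ⟨k • u e, fun a => by rw [smul_vecMulVec, map_smul, hG, smul_vecMulVec]⟩

variable [DecidableEq n]

theorem eq_mul_mul_transpose_of_forall_eq_vecMulVec {F G : (n → K) →ₗ[K] n → K}
    (h : ∀ x a, T (vecMulVec x a) = vecMulVec (F x) (G a)) (X : Matrix n n K) :
    T X = LinearMap.toMatrix' F * X * (LinearMap.toMatrix' G)ᵀ := by
  suffices T = (LinearMap.mulLeft K (LinearMap.toMatrix' F)) ∘ₗ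
      (LinearMap.mulRight K (LinearMap.toMatrix' G)ᵀ) by
    simp [this, Matrix.mul_assoc]
  refine ext_linearMap _ fun i j => LinearMap.ext_ring ?_
  simp only [LinearMap.comp_apply, singleLinearMap_apply, LinearMap.mulLeft_apply,
    LinearMap.mulRight_apply, single_eq_single_vecMulVec_single, h, mul_vecMulVec, vecMulVec_mul,
    vecMul_transpose, LinearMap.toMatrix'_mulVec]

theorem isUnit_of_surjective_mul_mul (hT : Function.Surjective T) {A B : Matrix n n K}
    (h : ∀ X, T X = A * X * B) : IsUnit A ∧ IsUnit B := by
  obtain ⟨X, hX⟩ := hT 1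
  rw [h] at hX
  exact ⟨(isUnit_iff_isUnit_det A).2
    (isUnit_det_of_right_inverse (B := X * B) (by rwa [← Matrix.mul_assoc])),
    (isUnit_iff_isUnit_det B).2 (isUnit_det_of_left_inverse hX)⟩

theorem exists_eq_mul_mul_of_map_vecMulVecLeft_le [Nonempty n] (hT : Function.Bijective T)
    (hrk : ∀ X : Matrix n n K, X.rank ≤ 1 → (T X).rank ≤ 1)
    (hrow : ∀ x, ∃ u, Submodule.map T (vecMulVecLeft x) ≤ vecMulVecLeft u) :
    ∃ A B : Matrix n n K, IsUnit A ∧ IsUnit B ∧ ∀ X, T X = A * X * B := by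
  obtain ⟨G, hG⟩ := exists_linearEquiv_forall_exists_eq_vecMulVec hT.1 hrk hrow
  obtain ⟨F, hF⟩ := exists_linearMap_forall_eq_vecMulVec G.surjective hG
  have hT' := eq_mul_mul_transpose_of_forall_eq_vecMulVec hF
  exact ⟨_, _, (isUnit_of_surjective_mul_mul hT.2 hT').1,
    (isUnit_of_surjective_mul_mul hT.2 hT').2, hT'⟩

theorem exists_eq_mul_mul_or_eq_mul_transpose_mul [Nontrivial n] (hT : Function.Bijective T)
    (hrk : ∀ X : Matrix n n K, X.rank ≤ 1 → (T X).rank ≤ 1) :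
    ∃ A B : Matrix n n K, IsUnit A ∧ IsUnit B ∧
      ((∀ X, T X = A * X * B) ∨ ∀ X, T X = A * Xᵀ * B) := by
  rcases forall_map_vecMulVecLeft_le_or hT.1 hrk with hrow | hcol
  · obtain ⟨A, B, hA, hB, h⟩ := exists_eq_mul_mul_of_map_vecMulVecLeft_le hT hrk hrow
    exact ⟨A, B, hA, hB, Or.inl h⟩
  -- otherwise `X ↦ (T X)ᵀ` is of the first kind
  let τ := transposeLinearEquiv n n K K
  obtain ⟨A, B, hA, hB, h⟩ := exists_eq_mul_mul_of_map_vecMulVecLeft_le (T := τ.toLinearMap ∘ₗ T)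
    (τ.bijective.comp hT) (fun X hX => by simpa [τ, rank_transpose] using hrk X hX) fun x => by
      obtain ⟨v, hv⟩ := hcol x
      refine ⟨v, ?_⟩
      rw [Submodule.map_comp]
      rintro _ ⟨_, hX, rfl⟩
      obtain ⟨c, rfl⟩ := mem_vecMulVecRight.1 (hv hX)
      exact mem_vecMulVecLeft.2 ⟨c, by simp [τ, transpose_vecMulVec]⟩
  refine ⟨Bᵀ, Aᵀ, (isUnit_transpose B).2 hB, (isUnit_transpose A).2 hA, Or.inr fun X => ?_⟩
  simpa [τ, Matrix.mul_assoc] using congr_arg transpose (h X)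

theorem eq_map_one_mul_of_subsingleton [Subsingleton n] (X : Matrix n n K) : T X = T 1 * X := by
  have hX : X = X.trace • 1 := ext fun i j => by
    obtain rfl := Subsingleton.elim i j
    simp [trace, Fintype.sum_subsingleton _ i]
  rw [hX, map_smul, Matrix.mul_smul, mul_one]

end Preserver

end Matrix

open Matrix in
theorem stmt3 {n : ℕ}
    (T : Matrix (Fin n) (Fin n) ℂ →ₗ[ℂ] Matrix (Fin n) (Fin n) ℂ)
    (hT : Function.Bijective T)
    (hrank : ∀ X : Matrix (Fin n) (Fin n) ℂ, X.rank = 1 → (T X).rank = 1) :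
    ∃ A B : Matrix (Fin n) (Fin n) ℂ, IsUnit A ∧ IsUnit B ∧
      ((∀ X, T X = A * X * B) ∨ (∀ X, T X = A * Xᵀ * B)) := by
  rcases subsingleton_or_nontrivial (Fin n) with _ | _
  · have h X : T X = T 1 * X * 1 := by rw [mul_one, eq_map_one_mul_of_subsingleton]
    exact ⟨T 1, 1, (isUnit_of_surjective_mul_mul hT.2 h).1, isUnit_one, Or.inl h⟩
  · exact exists_eq_mul_mul_or_eq_mul_transpose_mul hT fun X => rank_le_one_of_rank_eq_one hrank
end

section
/- Let V be a finite-dimensional complex vector space, S the swap operator on V ⊗ V, and F, G invertible linear operators on V. If R = (F ⊗ G) ∘ S satisfies the Yang-Baxter equation, then F and G commute: FG = GF. -/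
open TensorProduct

variable {V : Type*} [AddCommGroup V] [Module ℂ V]

/-- The swap operator `S : a ⊗ b ↦ b ⊗ a`. -/
noncomputable def swapOp : Module.End ℂ (V ⊗[ℂ] V) :=
  (TensorProduct.comm ℂ V V).toLinearMap

lemma mid_eq [FiniteDimensional ℂ V] (x u v y : V) (hx : x ≠ 0) (hy : y ≠ 0)
    (h : (x ⊗ₜ[ℂ] u) ⊗ₜ[ℂ] y = (x ⊗ₜ[ℂ] v) ⊗ₜ[ℂ] y) : u = v := by
  obtain ⟨f, hf⟩ : ∃ f : Module.Dual ℂ V, f x ≠ 0 := by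
    by_contra hc
    push_neg at hc
    exact hx ((Module.forall_dual_apply_eq_zero_iff ℂ x).mp hc)
  obtain ⟨g, hg⟩ : ∃ g : Module.Dual ℂ V, g y ≠ 0 := by
    by_contra hc
    push_neg at hc
    exact hy ((Module.forall_dual_apply_eq_zero_iff ℂ y).mp hc)
  have h2 := congrArg (TensorProduct.map (TensorProduct.map f (LinearMap.id : V →ₗ[ℂ] V)) g) h
  simp only [TensorProduct.map_tmul, LinearMap.id_coe, id_eq] at h2
  have h3 := congrArg (TensorProduct.rid ℂ (ℂ ⊗[ℂ] V)) h2
  simp only [TensorProduct.rid_tmul] at h3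
  have h4 := congrArg (TensorProduct.lid ℂ V) h3
  simp only [map_smul, TensorProduct.lid_tmul] at h4
  have h5 : u = v := by
    have := smul_right_injective V hg h4
    exact smul_right_injective V hf this
  exact h5

theorem stmt4 [FiniteDimensional ℂ V] (F G : Module.End ℂ V)
    (hF : Function.Bijective F) (hG : Function.Bijective G)
    (hYB : YangBaxter (TensorProduct.map F G * swapOp)) :
    F * G = G * F := by
  unfold YangBaxter at hYB
  have key : ∀ a b c : V,
      (F (F c) ⊗ₜ[ℂ] G (F b)) ⊗ₜ[ℂ] G (G a) = (F (F c) ⊗ₜ[ℂ] F (G b)) ⊗ₜ[ℂ] G (G a) := by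
    intro a b c
    have k := DFunLike.congr_fun hYB ((a ⊗ₜ[ℂ] b) ⊗ₜ[ℂ] c)
    simpa [ybLeft, ybRight, swapOp, Module.End.mul_apply] using k
  by_cases htriv : ∀ v : V, v = 0
  · ext b
    simp [Module.End.mul_apply, htriv (G b), htriv (F b), htriv (F (G b)), htriv (G (F b))]
  · push_neg at htriv
    obtain ⟨w, hw⟩ := htriv
    ext b
    obtain ⟨c₁, hc₁⟩ := hF.2 w
    obtain ⟨c₂, hc₂⟩ := hF.2 c₁
    obtain ⟨a₁, ha₁⟩ := hG.2 w
    obtain ⟨a₂, ha₂⟩ := hG.2 a₁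
    have h := key a₂ b c₂
    rw [hc₂, hc₁, ha₂, ha₁] at h
    have := mid_eq w (G (F b)) (F (G b)) w hw hw h
    simpa [Module.End.mul_apply] using this.symm
end
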